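/- Let (λᵢ)_{i≥1} and (μⱼ)_{j≥1} be nonnegative real sequences with λ₁ = μ₁ = 1, λᵢ < 1 for i ≥ 2, μⱼ < 1 for j ≥ 2, Σᵢ λᵢ² < ∞, Σⱼ μⱼ² < ∞, and let (cᵢⱼ) satisfy Σᵢ cᵢⱼ₀² = Σⱼ c_{i₀j}² = 1 for all i₀, j₀. Then lim_{t→∞} [Σᵢ λᵢ^{2t} + Σⱼ μⱼ^{2t} − 2 Σ_{i,j} λᵢᵗ μⱼᵗ cᵢⱼ²] = 2(1 − c₁₁²). -/

import Mathlib

/-!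
Write the double sum as `∑ᵢ lᵢᵗ Gₜ(i)` with `Gₜ(i) = ∑ⱼ mⱼᵗ cᵢⱼ² ∈ [0, 1]`. All three sums are then
of the form `∑ᵢ xᵢᵗ wₜ(i)` with `x` equal to `1` at the index `0` and `< 1` elsewhere, and a summable
majorant of `wₜ`; by dominated convergence (Tannery's theorem) such a sum converges to the limit of
its `0`-th term. This gives `1`, `1` and `c₀₀²` respectively.
-/

open Filter Topology

section PowerWeights

variable {ι κ : Type*} {x : ι → ℝ} {i₀ : ι}

lemma le_one_of_eq_one_of_lt_one (hxi₀ : x i₀ = 1) (hx1 : ∀ i ≠ i₀, x i < 1) (i : ι) :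
    x i ≤ 1 := by
  rcases eq_or_ne i i₀ with rfl | hi
  · exact hxi₀.le
  · exact (hx1 i hi).le

lemma tendsto_tsum_pow_mul {w : ℕ → ι → ℝ} {W : ι → ℝ} {a : ℝ}
    (hx0 : ∀ i, 0 ≤ x i) (hxi₀ : x i₀ = 1) (hx1 : ∀ i ≠ i₀, x i < 1)
    (hW : Summable W) (hwW : ∀ t i, |w t i| ≤ W i)
    (hw : Tendsto (w · i₀) atTop (𝓝 a)) :
    Tendsto (fun t => ∑' i, x i ^ t * w t i) atTop (𝓝 a) := by
  classical
  have hbound : ∀ t i, |x i ^ t * w t i| ≤ x i ^ t * W i := fun t i => by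
    rw [abs_mul, abs_of_nonneg (pow_nonneg (hx0 i) t)]
    exact mul_le_mul_of_nonneg_left (hwW t i) (pow_nonneg (hx0 i) t)
  have hlim : ∀ i, Tendsto (fun t => x i ^ t * w t i) atTop (𝓝 (if i = i₀ then a else 0)) := by
    intro i
    split_ifs with hi
    · subst hi
      simpa [hxi₀] using hw
    · have hxt := tendsto_pow_atTop_nhds_zero_of_lt_one (hx0 i) (hx1 i hi)
      refine squeeze_zero_norm (fun t => hbound t i) ?_
      simpa using hxt.mul_const (W i)
  have h := tendsto_tsum_of_dominated_convergence hW hlim <| .of_forall fun t i =>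
    (hbound t i).trans <| mul_le_of_le_one_left ((abs_nonneg _).trans (hwW t i))
      (pow_le_one₀ (hx0 i) (le_one_of_eq_one_of_lt_one hxi₀ hx1 i))
  rwa [tsum_ite_eq] at h

lemma tendsto_tsum_pow_mul_nhds_one {p : ℕ} (hp : p ≠ 0)
    (hx0 : ∀ i, 0 ≤ x i) (hxi₀ : x i₀ = 1) (hx1 : ∀ i ≠ i₀, x i < 1)
    (hxp : Summable (fun i => x i ^ p)) :
    Tendsto (fun t => ∑' i, x i ^ (p * t)) atTop (𝓝 1) := by
  rw [← tendsto_add_atTop_iff_nat 1]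
  simp only [mul_add_one, pow_add, pow_mul]
  refine tendsto_tsum_pow_mul (fun i => pow_nonneg (hx0 i) p) (by simp [hxi₀])
    (fun i hi => pow_lt_one₀ (hx0 i) (hx1 i hi) hp) hxp
    (fun _ i => (abs_of_nonneg (pow_nonneg (hx0 i) p)).le) ?_
  simp [hxi₀]

lemma tsum_mul_le_tsum {y v : κ → ℝ} (hy0 : ∀ j, 0 ≤ y j) (hy1 : ∀ j, y j ≤ 1)
    (hv0 : ∀ j, 0 ≤ v j) (hv : Summable v) :
    ∑' j, y j * v j ≤ ∑' j, v j :=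
  have hle : ∀ j, y j * v j ≤ v j := fun j => mul_le_of_le_one_left (hv0 j) (hy1 j)
  (hv.of_nonneg_of_le (fun j => mul_nonneg (hy0 j) (hv0 j)) hle).tsum_le_tsum hle hv

theorem tendsto_tsum_tsum_pow_mul_pow_mul {y : κ → ℝ} {j₀ : κ} {v : ι → κ → ℝ}
    (hx0 : ∀ i, 0 ≤ x i) (hxi₀ : x i₀ = 1) (hx1 : ∀ i ≠ i₀, x i < 1)
    (hx2 : Summable (fun i => x i ^ 2))
    (hy0 : ∀ j, 0 ≤ y j) (hyj₀ : y j₀ = 1) (hy1 : ∀ j ≠ j₀, y j < 1)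
    (hv0 : ∀ i j, 0 ≤ v i j) (hv : ∀ i, Summable (v i)) (hv1 : ∀ i, ∑' j, v i j ≤ 1) :
    Tendsto (fun t => ∑' i, ∑' j, x i ^ t * y j ^ t * v i j) atTop (𝓝 (v i₀ j₀)) := by
  set G : ℕ → ι → ℝ := fun t i => ∑' j, y j ^ t * v i j
  have hG0 : ∀ t i, 0 ≤ G t i := fun t i =>
    tsum_nonneg fun j => mul_nonneg (pow_nonneg (hy0 j) t) (hv0 i j)
  have hG1 : ∀ t i, G t i ≤ 1 := fun t i =>
    (tsum_mul_le_tsum (fun j => pow_nonneg (hy0 j) t)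
      (fun j => pow_le_one₀ (hy0 j) (le_one_of_eq_one_of_lt_one hyj₀ hy1 j))
      (hv0 i) (hv i)).trans (hv1 i)
  have hGi₀ : Tendsto (G · i₀) atTop (𝓝 (v i₀ j₀)) :=
    tendsto_tsum_pow_mul hy0 hyj₀ hy1 (hv i₀)
      (fun _ j => (abs_of_nonneg (hv0 i₀ j)).le) tendsto_const_nhds
  have hsplit : ∀ t i, ∑' j, x i ^ t * y j ^ t * v i j = x i ^ t * G t i := fun t i => by
    simp only [G, ← tsum_mul_left, mul_assoc]
  simp only [hsplit]
  -- shifting `t` by 2 moves the factor `xᵢ²` into the weight, where it provides a summable majorant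
  rw [← tendsto_add_atTop_iff_nat 2]
  simp only [pow_add, mul_assoc]
  refine tendsto_tsum_pow_mul hx0 hxi₀ hx1 hx2 (fun t i => ?_) ?_
  · rw [abs_of_nonneg (mul_nonneg (sq_nonneg _) (hG0 _ i))]
    exact mul_le_of_le_one_right (sq_nonneg _) (hG1 _ i)
  · simpa [hxi₀] using (tendsto_add_atTop_iff_nat 2).2 hGi₀

end PowerWeights

theorem stmt9_general (l m : ℕ → ℝ) (c : ℕ → ℕ → ℝ)
    (hlnn : ∀ i, 0 ≤ l i) (hmnn : ∀ j, 0 ≤ m j)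
    (hl0 : l 0 = 1) (hm0 : m 0 = 1)
    (hlgap : ∀ i, 1 ≤ i → l i < 1) (hmgap : ∀ j, 1 ≤ j → m j < 1)
    (hlsq : Summable (fun i => l i ^ 2)) (hmsq : Summable (fun j => m j ^ 2))
    (hcol : ∀ i₀, ∑' j, c i₀ j ^ 2 = 1) :
    Tendsto
      (fun t : ℕ =>
        (∑' i, l i ^ (2 * t)) + (∑' j, m j ^ (2 * t))
          - 2 * ∑' i, ∑' j, l i ^ t * m j ^ t * c i j ^ 2)
      atTop (nhds (2 * (1 - c 0 0 ^ 2))) := by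
  have hlgap' : ∀ i ≠ 0, l i < 1 := fun i hi => hlgap i (Nat.one_le_iff_ne_zero.2 hi)
  have hmgap' : ∀ j ≠ 0, m j < 1 := fun j hj => hmgap j (Nat.one_le_iff_ne_zero.2 hj)
  have hc : ∀ i, Summable (fun j => c i j ^ 2) := fun i => by
    by_contra h
    simpa [tsum_eq_zero_of_not_summable h] using hcol i
  have hl := tendsto_tsum_pow_mul_nhds_one two_ne_zero hlnn hl0 hlgap' hlsq
  have hm := tendsto_tsum_pow_mul_nhds_one two_ne_zero hmnn hm0 hmgap' hmsq
  have hlm := tendsto_tsum_tsum_pow_mul_pow_mul hlnn hl0 hlgap' hlsq hmnn hm0 hmgap'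
    (fun i j => sq_nonneg (c i j)) hc (fun i => (hcol i).le)
  convert (hl.add hm).sub (hlm.const_mul 2) using 2
  ring

/-- Asymptotics of the global diffusion distance for connected graphs.
With eigenvalue sequences `l`, `m` (indexed from 0, so `l 0 = m 0 = 1` are the top
eigenvalues), spectral gaps `l i < 1`, `m j < 1` for `i, j ≥ 1`, square-summability, and
overlap coefficients `c` with unit row and column square sums,
`∑ᵢ lᵢ^{2t} + ∑ⱼ mⱼ^{2t} − 2 ∑_{i,j} lᵢᵗ mⱼᵗ cᵢⱼ² → 2(1 − c₀₀²)` as `t → ∞`. -/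
theorem stmt9 (l m : ℕ → ℝ) (c : ℕ → ℕ → ℝ)
    (hlnn : ∀ i, 0 ≤ l i) (hmnn : ∀ j, 0 ≤ m j)
    (hl0 : l 0 = 1) (hm0 : m 0 = 1)
    (hlgap : ∀ i, 1 ≤ i → l i < 1) (hmgap : ∀ j, 1 ≤ j → m j < 1)
    (hlsq : Summable (fun i => l i ^ 2)) (hmsq : Summable (fun j => m j ^ 2))
    (hrow : ∀ j₀, ∑' i, c i j₀ ^ 2 = 1) (hcol : ∀ i₀, ∑' j, c i₀ j ^ 2 = 1) :
    Tendsto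
      (fun t : ℕ =>
        (∑' i, l i ^ (2 * t)) + (∑' j, m j ^ (2 * t))
          - 2 * ∑' i, ∑' j, l i ^ t * m j ^ t * c i j ^ 2)
      atTop (nhds (2 * (1 - c 0 0 ^ 2))) :=
  stmt9_general l m c hlnn hmnn hl0 hm0 hlgap hmgap hlsq hmsq hcol
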